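/- arXiv:1612.08741 — 2 statements merged into one kernel-verified Lean document; each statement's English description precedes it below -/
import Mathlib

section
/- Let (X₁, X₂) be random vectors in ({0,1}ⁿ)² with joint law 𝒫, let π denote the uniform distribution on {0,1}ⁿ, and let N = #{x ∈ [n] : (X₁(x), X₂(x)) = (0,1)}. Then 𝒫(|N − n/4| ≥ n/8) ≤ 6 e^{−n/72} + d_TV(X₁, π) + d_TV(X₂, π) + d_TV(X₁ + X₂, π), where X₁ + X₂ denotes coordinatewise addition mod 2. -/
open Finset

/-- Total variation distance between the pushforward of the probability mass function `P`
under `g` and the uniform distribution on the (finite) codomain. -/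
noncomputable def pushTVUnif {α β : Type*} [Fintype α] [Fintype β] [DecidableEq β]
    (P : α → ℝ) (g : α → β) : ℝ :=
  (1 / 2) * ∑ z : β,
    |(∑ y ∈ Finset.univ.filter (fun y => g y = z), P y) - 1 / (Fintype.card β : ℝ)|

/-!
Write `S(v) = ∑ₓ (-1)^{v(x)}` for `v ∈ {0,1}ⁿ`. Checking the four patterns of `(a, b)` at a
coordinate gives `4N - n = S(X₁) - S(X₂) - S(X₁ + X₂)`, so `|N - n/4| ≥ n/8` forces
`|S(Xᵢ)| ≥ n/6` for one of `X₁`, `X₂`, `X₁ + X₂`. Under the uniform law `S` is a sum of `n`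
independent signs, and the Chernoff bound `cosh t ≤ exp (t²/2)` gives
`π(|S| ≥ n/6) ≤ 2 e^{-n/72}`. Passing from `π` to the law of each of the three vectors costs
at most its total variation distance to `π`, and a union bound finishes the proof.
-/

noncomputable def spin (b : Bool) : ℝ := if b then -1 else 1

variable {n : ℕ}

lemma sum_exp_mul_sum_spin (t : ℝ) :
    ∑ v : Fin n → Bool, Real.exp (t * ∑ x, spin (v x)) = (2 * Real.cosh t) ^ n := by
  have hbit : ∑ b : Bool, Real.exp (t * spin b) = 2 * Real.cosh t := by
    rw [Fintype.sum_bool, Real.cosh_eq, spin, spin, if_pos rfl, if_neg Bool.false_ne_true,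
      mul_neg_one, mul_one]
    ring
  simp_rw [Finset.mul_sum, Real.exp_sum]
  rw [← Fintype.prod_sum fun (_ : Fin n) b => Real.exp (t * spin b), hbit, prod_const,
    card_univ, Fintype.card_fin]

lemma card_le_mul_sum_spin_mul_exp_le (t b : ℝ) :
    (#{v : Fin n → Bool | b ≤ t * ∑ x, spin (v x)} : ℝ) * Real.exp b
      ≤ (2 * Real.cosh t) ^ n := by
  rw [← sum_exp_mul_sum_spin, ← nsmul_eq_mul, ← sum_const]
  calc ∑ _v ∈ {v : Fin n → Bool | b ≤ t * ∑ x, spin (v x)}, Real.exp b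
      ≤ ∑ v ∈ {v : Fin n → Bool | b ≤ t * ∑ x, spin (v x)}, Real.exp (t * ∑ x, spin (v x)) :=
        sum_le_sum fun v hv => Real.exp_le_exp.2 (mem_filter.1 hv).2
    _ ≤ ∑ v : Fin n → Bool, Real.exp (t * ∑ x, spin (v x)) :=
        sum_le_univ_sum_of_nonneg fun v => (Real.exp_pos _).le

lemma card_le_abs_sum_spin_le {t : ℝ} (ht : 0 ≤ t) (a : ℝ) :
    (#{v : Fin n → Bool | a ≤ |∑ x, spin (v x)|} : ℝ)
      ≤ 2 * 2 ^ n * Real.exp (n * t ^ 2 / 2 - t * a) := by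
  have hsplit : #{v : Fin n → Bool | a ≤ |∑ x, spin (v x)|}
      ≤ #{v : Fin n → Bool | t * a ≤ t * ∑ x, spin (v x)}
        + #{v : Fin n → Bool | t * a ≤ -t * ∑ x, spin (v x)} := by
    refine (card_le_card fun v hv => ?_).trans (card_union_le _ _)
    simp only [mem_union, mem_filter, mem_univ, true_and, neg_mul, ← mul_neg] at hv ⊢
    rcases le_abs'.1 hv with h | h
    · exact .inr (mul_le_mul_of_nonneg_left (by linarith) ht)
    · exact .inl (mul_le_mul_of_nonneg_left h ht)
  have htail (s : ℝ) : (#{v : Fin n → Bool | t * a ≤ s * ∑ x, spin (v x)} : ℝ)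
      ≤ (2 * Real.cosh s) ^ n * Real.exp (-(t * a)) := by
    rw [Real.exp_neg, ← div_eq_mul_inv, le_div_iff₀ (Real.exp_pos _)]
    exact card_le_mul_sum_spin_mul_exp_le s (t * a)
  have hcosh : (2 * Real.cosh t) ^ n ≤ 2 ^ n * Real.exp (n * (t ^ 2 / 2)) := by
    rw [mul_pow, Real.exp_nat_mul]
    gcongr
    exact Real.cosh_le_exp_half_sq t
  calc (#{v : Fin n → Bool | a ≤ |∑ x, spin (v x)|} : ℝ)
      ≤ #{v : Fin n → Bool | t * a ≤ t * ∑ x, spin (v x)}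
        + #{v : Fin n → Bool | t * a ≤ -t * ∑ x, spin (v x)} := by exact_mod_cast hsplit
    _ ≤ (2 * Real.cosh t) ^ n * Real.exp (-(t * a))
        + (2 * Real.cosh (-t)) ^ n * Real.exp (-(t * a)) := add_le_add (htail t) (htail (-t))
    _ = 2 * (2 * Real.cosh t) ^ n * Real.exp (-(t * a)) := by rw [Real.cosh_neg]; ring
    _ ≤ 2 * (2 ^ n * Real.exp (n * (t ^ 2 / 2))) * Real.exp (-(t * a)) := by gcongr
    _ = 2 * 2 ^ n * Real.exp (n * t ^ 2 / 2 - t * a) := by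
        rw [mul_assoc, mul_assoc, ← Real.exp_add]; ring_nf

lemma sum_filter_le_half_sum_abs_of_sum_eq_zero {β : Type*} {s : Finset β} {f : β → ℝ}
    (hf : ∑ z ∈ s, f z = 0) (p : β → Prop) [DecidablePred p] :
    ∑ z ∈ s with p z, f z ≤ (∑ z ∈ s, |f z|) / 2 := by
  have hsplit := sum_filter_add_sum_filter_not s p f
  have habs := sum_filter_add_sum_filter_not s p fun z => |f z|
  have hpos : ∑ z ∈ s with p z, f z ≤ ∑ z ∈ s with p z, |f z| :=
    sum_le_sum fun z _ => le_abs_self (f z)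
  have hneg : -∑ z ∈ s with ¬p z, f z ≤ ∑ z ∈ s with ¬p z, |f z| := by
    rw [← sum_neg_distrib]
    exact sum_le_sum fun z _ => neg_le_abs (f z)
  linarith

lemma sum_filter_comp_le_card_div_add_pushTVUnif {α β : Type*} [Fintype α] [Fintype β]
    [DecidableEq β] {P : α → ℝ} (hP1 : ∑ y, P y = 1) (g : α → β) (Q : β → Prop)
    [DecidablePred Q] :
    ∑ y with Q (g y), P y ≤ #{z | Q z} / Fintype.card β + pushTVUnif P g := by
  have : Nonempty α := by
    by_contra h
    simp [not_nonempty_iff.1 h] at hP1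
  have : Nonempty β := .map g ‹_›
  set u : ℝ := 1 / Fintype.card β
  set p : β → ℝ := fun z => ∑ y with g y = z, P y
  have hdev : ∑ z, (p z - u) = 0 := by
    rw [sum_sub_distrib, sum_fiberwise, hP1, sum_const, card_univ, nsmul_eq_mul,
      mul_one_div_cancel (Nat.cast_ne_zero.2 Fintype.card_ne_zero), sub_self]
  calc ∑ y with Q (g y), P y
      = ∑ z with Q z, p z := by
        rw [sum_fiberwise_eq_sum_filter]
        simp
    _ = ∑ z with Q z, u + ∑ z with Q z, (p z - u) := by rw [← sum_add_distrib]; simp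
    _ ≤ #{z | Q z} / Fintype.card β + pushTVUnif P g := by
        gcongr
        · simp [u, div_eq_mul_inv]
        · rw [pushTVUnif, one_div_mul_eq_div]
          exact sum_filter_le_half_sum_abs_of_sum_eq_zero hdev Q

lemma sum_filter_le_sum_filter_add_sum_filter {ι M : Type*} [AddCommMonoid M] [PartialOrder M]
    [IsOrderedAddMonoid M] {s : Finset ι} {f : ι → M} (hf : ∀ i ∈ s, 0 ≤ f i)
    {p q r : ι → Prop} [DecidablePred p] [DecidablePred q] [DecidablePred r]
    (h : ∀ i ∈ s, p i → q i ∨ r i) :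
    ∑ i ∈ s with p i, f i ≤ ∑ i ∈ s with q i, f i + ∑ i ∈ s with r i, f i := by
  classical
  have hs {t : Finset ι} (ht : t ⊆ s) : ∀ i ∈ t, 0 ≤ f i := fun i hi => hf i (ht hi)
  calc ∑ i ∈ s with p i, f i ≤ ∑ i ∈ {i ∈ s | q i} ∪ {i ∈ s | r i}, f i := by
        refine sum_le_sum_of_subset_of_nonneg (fun i hi => ?_)
          fun i hi _ => hs (union_subset (filter_subset _ _) (filter_subset _ _)) i hi
        obtain ⟨his, hpi⟩ := mem_filter.1 hi
        rcases h i his hpi with hqi | hri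
        · exact mem_union_left _ (mem_filter.2 ⟨his, hqi⟩)
        · exact mem_union_right _ (mem_filter.2 ⟨his, hri⟩)
    _ ≤ ∑ i ∈ {i ∈ s | q i} ∪ {i ∈ s | r i}, f i + ∑ i ∈ {i ∈ s | q i} ∩ {i ∈ s | r i}, f i :=
        le_add_of_nonneg_right (sum_nonneg (hs (inter_subset_left.trans (filter_subset _ _))))
    _ = ∑ i ∈ s with q i, f i + ∑ i ∈ s with r i, f i := sum_union_inter

lemma spin_sub_spin_sub_spin_xor (a b : Bool) :
    spin a - spin b - spin (xor a b) = 4 * (if a = false ∧ b = true then 1 else 0) - 1 := by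
  cases a <;> cases b <;> norm_num [spin]

lemma four_mul_card_pattern_sub_eq (u v : Fin n → Bool) :
    4 * (#{x | u x = false ∧ v x = true} : ℝ) - n
      = ∑ x, spin (u x) - ∑ x, spin (v x) - ∑ x, spin (xor (u x) (v x)) := by
  rw [natCast_card_filter, mul_sum]
  simp only [← sum_sub_distrib, spin_sub_spin_sub_spin_xor]
  simp

lemma le_abs_sum_spin_of_le_abs_card_pattern_sub {u v : Fin n → Bool}
    (h : (n : ℝ) / 8 ≤ |(#{x | u x = false ∧ v x = true} : ℝ) - n / 4|) :
    (n : ℝ) / 6 ≤ |∑ x, spin (u x)| ∨ (n : ℝ) / 6 ≤ |∑ x, spin (v x)| ∨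
      (n : ℝ) / 6 ≤ |∑ x, spin (xor (u x) (v x))| := by
  by_contra! hsmall
  obtain ⟨hu, hv, huv⟩ := hsmall
  rw [abs_lt] at hu hv huv
  have := four_mul_card_pattern_sub_eq u v
  rcases le_abs'.1 h with h | h <;> linarith

lemma sum_filter_le_abs_sum_spin_le {α : Type*} [Fintype α] {P : α → ℝ}
    (hP1 : ∑ y, P y = 1) (g : α → Fin n → Bool) :
    ∑ y with (n : ℝ) / 6 ≤ |∑ x, spin (g y x)|, P y
      ≤ 2 * Real.exp (-(n : ℝ) / 72) + pushTVUnif P g := by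
  refine (sum_filter_comp_le_card_div_add_pushTVUnif hP1 g
    fun v => (n : ℝ) / 6 ≤ |∑ x, spin (v x)|).trans (add_le_add_left ?_ _)
  have hcard : (Fintype.card (Fin n → Bool) : ℝ) = 2 ^ n := by simp
  rw [hcard, div_le_iff₀ (by positivity)]
  calc _ ≤ 2 * 2 ^ n * Real.exp (n * (1 / 6) ^ 2 / 2 - 1 / 6 * (n / 6)) :=
        card_le_abs_sum_spin_le (by norm_num) _
    _ = 2 * Real.exp (-(n : ℝ) / 72) * 2 ^ n := by ring_nf

/-- For a random pair `(X₁,X₂)` of vectors in `{0,1}ⁿ` with joint law `P` and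
`N = #{x : (X₁(x),X₂(x)) = (0,1)}`,
`P(|N − n/4| ≥ n/8) ≤ 6e^{−n/72} + d_TV(X₁,π) + d_TV(X₂,π) + d_TV(X₁+X₂,π)`,
where `π` is uniform on `{0,1}ⁿ` and `X₁+X₂` is coordinatewise addition mod 2. -/
theorem pattern_concentration_two (n : ℕ)
    (P : ((Fin n → Bool) × (Fin n → Bool)) → ℝ)
    (hP0 : ∀ y, 0 ≤ P y) (hP1 : ∑ y, P y = 1) :
    ∑ y ∈ Finset.univ.filter
        (fun y : (Fin n → Bool) × (Fin n → Bool) =>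
          (n : ℝ) / 8 ≤
            |(((Finset.univ.filter fun x : Fin n =>
                y.1 x = false ∧ y.2 x = true).card : ℝ)) - (n : ℝ) / 4|), P y
      ≤ 6 * Real.exp (-(n : ℝ) / 72) +
        pushTVUnif P (fun y => y.1) +
        pushTVUnif P (fun y => y.2) +
        pushTVUnif P (fun y => fun x => xor (y.1 x) (y.2 x)) := by
  have h₁ := sum_filter_le_abs_sum_spin_le hP1 fun y => y.1
  have h₂ := sum_filter_le_abs_sum_spin_le hP1 fun y => y.2
  have h₃ := sum_filter_le_abs_sum_spin_le hP1 fun y x => xor (y.1 x) (y.2 x)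
  calc _ ≤ ∑ y with (n : ℝ) / 6 ≤ |∑ x, spin (y.1 x)|, P y
          + (∑ y with (n : ℝ) / 6 ≤ |∑ x, spin (y.2 x)|, P y
            + ∑ y with (n : ℝ) / 6 ≤ |∑ x, spin (xor (y.1 x) (y.2 x))|, P y) := by
        refine (sum_filter_le_sum_filter_add_sum_filter (fun y _ => hP0 y)
          fun y _ hy => le_abs_sum_spin_of_le_abs_card_pattern_sub hy).trans ?_
        gcongr
        exact sum_filter_le_sum_filter_add_sum_filter (fun y _ => hP0 y) fun _ _ hy => hy
    _ ≤ _ := by linarith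
end

section
/- Let k ≥ 2 and let (X₁, …, X_k) be random vectors in ({0,1}ⁿ)^k with joint law 𝒫. Let N = #{x ∈ [n] : (X₁(x),…,X_k(x)) = (0,…,0,1)}. Then 𝒫(|N − n/2^k| ≥ n/2^{k+1}) ≤ 6 e^{−n/(9·2^{2k−1})} + d_TV((X₁,…,X_{k−1}), π_{k−1}) + d_TV((X₁,…,X_{k−2},X_k), π_{k−1}) + d_TV((X₁,…,X_{k−2},X_{k−1}+X_k), π_{k−1}) + d_TV((X₁,…,X_{k−2}), π_{k−2}), where π_j denotes the uniform measure on ({0,1}ⁿ)^j and vector addition is coordinatewise mod 2. -/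
open Finset

lemma pushTVUnif_nonneg {α β : Type*} [Fintype α] [Fintype β] [DecidableEq β]
    (P : α → ℝ) (g : α → β) : 0 ≤ pushTVUnif P g := by
  unfold pushTVUnif
  positivity

lemma sum_filter_mem_le_card_div_add_pushTVUnif {α β : Type*} [Fintype α] [Fintype β]
    [DecidableEq β] {P : α → ℝ} (hP : ∑ y, P y = 1) (g : α → β) (B : Finset β) :
    ∑ y with g y ∈ B, P y ≤ #B / Fintype.card β + pushTVUnif P g := by
  set u : ℝ := 1 / Fintype.card β
  set Q : β → ℝ := fun z => ∑ y with g y = z, P y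
  have hβ : Fintype.card β ≠ 0 := by
    rintro hβ
    have : IsEmpty α := ⟨fun y => (Fintype.card_eq_zero_iff.1 hβ).false (g y)⟩
    simp at hP
  have hQ : ∑ z, (Q z - u) = 0 := by
    rw [sum_sub_distrib, sum_fiberwise, hP, sum_const, card_univ, nsmul_eq_mul,
      mul_one_div_cancel (Nat.cast_ne_zero.2 hβ), sub_self]
  calc ∑ y with g y ∈ B, P y = ∑ z ∈ B, (u + (Q z - u)) := by
        simp only [add_sub_cancel, Q]
        exact (sum_fiberwise_eq_sum_filter univ B g P).symm
    _ ≤ ∑ z ∈ B, (u + (|Q z - u| + (Q z - u)) / 2) := by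
        gcongr with z
        linarith [le_abs_self (Q z - u)]
    _ ≤ ∑ z ∈ B, u + ∑ z, (|Q z - u| + (Q z - u)) / 2 := by
        rw [sum_add_distrib]
        gcongr
        · exact fun z _ _ => by linarith [neg_abs_le (Q z - u)]
        · exact subset_univ B
    _ = #B / Fintype.card β + pushTVUnif P g := by
        rw [sum_const, nsmul_eq_mul, ← sum_div, sum_add_distrib, hQ, pushTVUnif]
        ring

lemma sum_filter_le_of_imp_or {α : Type*} [Fintype α] {f : α → ℝ} (hf : ∀ a, 0 ≤ f a)
    {p q₁ q₂ q₃ : α → Prop} [DecidablePred p] [DecidablePred q₁] [DecidablePred q₂]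
    [DecidablePred q₃] (h : ∀ a, p a → q₁ a ∨ q₂ a ∨ q₃ a) :
    ∑ a with p a, f a ≤ ∑ a with q₁ a, f a + ∑ a with q₂ a, f a + ∑ a with q₃ a, f a := by
  simp only [sum_filter, ← sum_add_distrib]
  refine sum_le_sum fun a _ => ?_
  have := hf a
  have := h a
  split_ifs <;> grind

open MeasureTheory ProbabilityTheory Real

lemma measureReal_pi_abs_sum_sub_integral_ge_le {Ω ι : Type*} [MeasurableSpace Ω] [Fintype ι]
    (ν : Measure Ω) [IsProbabilityMeasure ν] {f : Ω → ℝ} (hf : Measurable f) {a b : ℝ}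
    (hab : ∀ ω, f ω ∈ Set.Icc a b) {ε : ℝ} (hε : 0 ≤ ε) :
    (Measure.pi fun _ : ι => ν).real {w | ε ≤ |∑ i, (f (w i) - ν[f])|}
      ≤ 2 * exp (-2 * ε ^ 2 / (Fintype.card ι * (b - a) ^ 2)) := by
  set μ := Measure.pi fun _ : ι => ν
  have hsubG (g : Ω → ℝ) (hg : HasSubgaussianMGF g ((‖b - a‖₊ / 2) ^ 2) ν) (i : ι) :
      HasSubgaussianMGF (fun w : ι → Ω => g (w i)) ((‖b - a‖₊ / 2) ^ 2) μ :=
    HasSubgaussianMGF.of_map (Y := fun w : ι → Ω => w i) (measurable_pi_apply i).aemeasurable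
      (by rwa [(measurePreserving_eval _ i).map_eq])
  have hcenter := hasSubgaussianMGF_of_mem_Icc hf.aemeasurable (ae_of_all ν hab)
  have tail (g : Ω → ℝ) (hg : Measurable g) (hgs : HasSubgaussianMGF g ((‖b - a‖₊ / 2) ^ 2) ν) :
      μ.real {w | ε ≤ ∑ i, g (w i)} ≤ exp (-2 * ε ^ 2 / (Fintype.card ι * (b - a) ^ 2)) := by
    refine (HasSubgaussianMGF.measure_sum_ge_le_of_iIndepFun (iIndepFun_pi (X := fun _ => g)
      (fun _ => hg.aemeasurable)) (fun i _ => hsubG g hgs i) hε).trans_eq ?_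
    congr 1
    push_cast
    rw [Finset.sum_const, Finset.card_univ, nsmul_eq_mul, Real.norm_eq_abs,
      div_pow, sq_abs, show (2:ℝ) * (Fintype.card ι * ((b - a) ^ 2 / 2 ^ 2))
        = Fintype.card ι * (b - a) ^ 2 / 2 by ring, div_div_eq_mul_div]
    ring
  calc μ.real {w | ε ≤ |∑ i, (f (w i) - ν[f])|}
      ≤ μ.real ({w | ε ≤ ∑ i, (f (w i) - ν[f])} ∪ {w | ε ≤ ∑ i, -(f (w i) - ν[f])}) := by
        refine measureReal_mono (fun w hw => ?_)
        rw [Set.mem_union, Set.mem_ofPred_eq, Set.mem_ofPred_eq, Finset.sum_neg_distrib]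
        exact le_abs.1 hw
    _ ≤ _ := measureReal_union_le _ _
    _ ≤ _ := by
        rw [two_mul]
        exact add_le_add (tail _ (by fun_prop) hcenter) (tail _ (by fun_prop) hcenter.neg)

lemma measureReal_pi_uniformOn_univ {ι γ : Type*} [Fintype ι] [DecidableEq ι] [Fintype γ]
    [MeasurableSpace γ] [DiscreteMeasurableSpace γ] [Nonempty γ] (p : (ι → γ) → Prop)
    [DecidablePred p] :
    (Measure.pi fun _ : ι => uniformOn (Set.univ : Set γ)).real {w | p w}
      = #{w | p w} / Fintype.card (ι → γ) := by
  rw [← uniformOn_pi, Set.pi_univ, measureReal_def, uniformOn_univ, ← coe_filter_univ,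
    Measure.count_apply_finset]
  simp

lemma card_abs_card_filter_eq_sub_ge_div_le {ι γ : Type*} [Fintype ι] [DecidableEq ι]
    [Fintype γ] [DecidableEq γ] (c₀ : γ) {t : ℝ} (ht : 0 ≤ t) :
    (#{w : ι → γ | t ≤ |(#{i | w i = c₀} : ℝ) - Fintype.card ι / Fintype.card γ|} : ℝ)
        / Fintype.card (ι → γ)
      ≤ 2 * exp (-2 * t ^ 2 / Fintype.card ι) := by
  let _ : MeasurableSpace γ := ⊤
  have : Nonempty γ := ⟨c₀⟩
  set ν := uniformOn (Set.univ : Set γ)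
  have hmean : ∫ c, (if c = c₀ then (1 : ℝ) else 0) ∂ν = 1 / Fintype.card γ := by
    rw [integral_fintype .of_finite]
    simp [ν, Measure.real, uniformOn_univ]
  have hsum (w : ι → γ) : ∑ i, ((if w i = c₀ then (1 : ℝ) else 0) - 1 / Fintype.card γ)
      = #{i | w i = c₀} - Fintype.card ι / Fintype.card γ := by
    simp [Finset.sum_sub_distrib, Finset.sum_boole, div_eq_mul_inv]
  have h := measureReal_pi_abs_sum_sub_integral_ge_le ν (f := fun c => if c = c₀ then (1 : ℝ) else 0)
    .of_discrete (a := 0) (b := 1) (fun c => by split_ifs <;> simp) ht (ι := ι)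
  simp only [hmean, hsum, sub_zero, one_pow, mul_one] at h
  rwa [measureReal_pi_uniformOn_univ] at h

def patternCount {k n : ℕ} (z : Fin k → Fin n → Bool) : ℕ :=
  #{x | ∀ i : Fin k, z i x = decide (i.val = k - 1)}

lemma forall_eq_decide_val_eq_iff {k : ℕ} (w : Fin (k + 1) → Bool) :
    (∀ i : Fin (k + 1), w i = decide (i.val = k)) ↔
      (∀ i : Fin k, w i.castSucc = false) ∧ w (Fin.last k) = true := by
  simp [Fin.forall_fin_succ', Fin.val_castSucc, Nat.ne_of_lt]

section Rows

variable {m n : ℕ}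

def dropLastRow (y : Fin (m + 2) → Fin n → Bool) : Fin (m + 1) → Fin n → Bool :=
  fun i => y ⟨i.val, by omega⟩

def dropSecondLastRow (y : Fin (m + 2) → Fin n → Bool) : Fin (m + 1) → Fin n → Bool :=
  fun i => if i.val < m then y ⟨i.val, by omega⟩ else y ⟨m + 1, by omega⟩

def xorLastTwoRows (y : Fin (m + 2) → Fin n → Bool) : Fin (m + 1) → Fin n → Bool :=
  fun i => if i.val < m then y ⟨i.val, by omega⟩
    else fun x => xor (y ⟨m, by omega⟩ x) (y ⟨m + 1, by omega⟩ x)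

variable (y : Fin (m + 2) → Fin n → Bool) (x : Fin n)

lemma forall_apply_eq_decide_iff :
    (∀ i : Fin (m + 2), y i x = decide (i.val = m + 1)) ↔
      (∀ i : Fin m, y ⟨i, by omega⟩ x = false) ∧ y ⟨m, by omega⟩ x = false ∧
        y ⟨m + 1, by omega⟩ x = true := by
  rw [forall_eq_decide_val_eq_iff (fun i => y i x), Fin.forall_fin_succ']
  simp only [and_assoc]
  exact Iff.rfl

lemma dropLastRow_forall_eq_decide_iff :
    (∀ i : Fin (m + 1), dropLastRow y i x = decide (i.val = m)) ↔
      (∀ i : Fin m, y ⟨i, by omega⟩ x = false) ∧ y ⟨m, by omega⟩ x = true :=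
  (forall_eq_decide_val_eq_iff _).trans (by simp [dropLastRow])

lemma dropSecondLastRow_forall_eq_decide_iff :
    (∀ i : Fin (m + 1), dropSecondLastRow y i x = decide (i.val = m)) ↔
      (∀ i : Fin m, y ⟨i, by omega⟩ x = false) ∧ y ⟨m + 1, by omega⟩ x = true :=
  (forall_eq_decide_val_eq_iff _).trans (by simp [dropSecondLastRow])

lemma xorLastTwoRows_forall_eq_decide_iff :
    (∀ i : Fin (m + 1), xorLastTwoRows y i x = decide (i.val = m)) ↔
      (∀ i : Fin m, y ⟨i, by omega⟩ x = false) ∧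
        xor (y ⟨m, by omega⟩ x) (y ⟨m + 1, by omega⟩ x) = true :=
  (forall_eq_decide_val_eq_iff _).trans (by simp [xorLastTwoRows])

/-- On a column with zero prefix and last two bits `a, b` this reads
`2 (1 - a) b = b - a + (a xor b)`. -/
lemma two_mul_patternCount_column :
    2 * (if ∀ i : Fin (m + 2), y i x = decide (i.val = m + 1) then 1 else 0 : ℝ) =
      (if ∀ i : Fin (m + 1), dropSecondLastRow y i x = decide (i.val = m) then 1 else 0)
        - (if ∀ i : Fin (m + 1), dropLastRow y i x = decide (i.val = m) then 1 else 0)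
        + (if ∀ i : Fin (m + 1), xorLastTwoRows y i x = decide (i.val = m) then 1 else 0) := by
  simp only [forall_apply_eq_decide_iff, dropSecondLastRow_forall_eq_decide_iff,
    dropLastRow_forall_eq_decide_iff, xorLastTwoRows_forall_eq_decide_iff]
  by_cases hprefix : ∀ i : Fin m, y ⟨i, by omega⟩ x = false <;>
    cases y ⟨m, by omega⟩ x <;> cases y ⟨m + 1, by omega⟩ x <;> norm_num [hprefix]

omit x in
lemma two_mul_patternCount :
    2 * (patternCount y : ℝ) = patternCount (dropSecondLastRow y) - patternCount (dropLastRow y)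
      + patternCount (xorLastTwoRows y) := by
  simp only [patternCount, Nat.add_sub_cancel, natCast_card_filter, mul_sum, ← sum_sub_distrib,
    ← sum_add_distrib]
  exact sum_congr rfl fun x _ => two_mul_patternCount_column y x

end Rows

lemma card_abs_patternCount_sub_ge_div_le (k n : ℕ) {t : ℝ} (ht : 0 ≤ t) :
    (#{z : Fin k → Fin n → Bool | t ≤ |(patternCount z : ℝ) - n / 2 ^ k|} : ℝ)
        / Fintype.card (Fin k → Fin n → Bool)
      ≤ 2 * exp (-2 * t ^ 2 / n) := by
  let e := Equiv.piComm fun (_ : Fin k) (_ : Fin n) => Bool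
  set c₀ : Fin k → Bool := fun i => decide (i.val = k - 1)
  have hcount (z : Fin k → Fin n → Bool) : patternCount z = #{x | e z x = c₀} := by
    simp [patternCount, funext_iff, e, c₀]
  have h := card_abs_card_filter_eq_sub_ge_div_le (ι := Fin n) c₀ ht
  simp only [Fintype.card_fin, Fintype.card_pi, Fintype.card_bool, prod_const, card_univ] at h
  convert h using 3
  · push_cast
    exact card_equiv e fun z => by simp [hcount]
  · simp [← pow_mul, mul_comm]

lemma le_abs_patternCount_row_sub_of_three_mul_le {m n : ℕ} (y : Fin (m + 2) → Fin n → Bool) {b t : ℝ}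
    (h : 3 * t ≤ |2 * (patternCount y : ℝ) - b|) :
    t ≤ |(patternCount (dropLastRow y) : ℝ) - b| ∨
      t ≤ |(patternCount (dropSecondLastRow y) : ℝ) - b| ∨
      t ≤ |(patternCount (xorLastTwoRows y) : ℝ) - b| := by
  by_contra! hlt
  obtain ⟨h₁, h₂, h₃⟩ := hlt
  rw [two_mul_patternCount] at h
  obtain ⟨h₁l, h₁r⟩ := abs_lt.1 h₁
  obtain ⟨h₂l, h₂r⟩ := abs_lt.1 h₂
  obtain ⟨h₃l, h₃r⟩ := abs_lt.1 h₃
  cases le_abs'.1 h <;> linarith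

lemma sum_abs_patternCount_sub_ge_le (m n : ℕ) (P : (Fin (m + 2) → Fin n → Bool) → ℝ)
    (hP0 : ∀ y, 0 ≤ P y) (hP1 : ∑ y, P y = 1) :
    ∑ y with (n : ℝ) / 2 ^ (m + 2 + 1) ≤ |(patternCount y : ℝ) - n / 2 ^ (m + 2)|, P y
      ≤ 6 * exp (-(n : ℝ) / (9 * 2 ^ (2 * (m + 2) - 1))) + pushTVUnif P dropLastRow
        + pushTVUnif P dropSecondLastRow + pushTVUnif P xorLastTwoRows := by
  set t : ℝ := n / (3 * 2 ^ (m + 2))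
  set B : Finset (Fin (m + 1) → Fin n → Bool) :=
    {z | t ≤ |(patternCount z : ℝ) - n / 2 ^ (m + 1)|}
  have hB : (#B : ℝ) / Fintype.card (Fin (m + 1) → Fin n → Bool)
      ≤ 2 * exp (-(n : ℝ) / (9 * 2 ^ (2 * (m + 2) - 1))) := by
    refine (card_abs_patternCount_sub_ge_div_le (m + 1) n (by positivity)).trans_eq ?_
    rw [show 2 * (m + 2) - 1 = 2 * m + 3 by omega]
    rcases eq_or_ne (n : ℝ) 0 with hn | hn
    · simp [t, hn]
    · congr 2
      simp only [t]
      field_simp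
      ring
  have hrows (y : Fin (m + 2) → Fin n → Bool)
      (hy : (n : ℝ) / 2 ^ (m + 2 + 1) ≤ |(patternCount y : ℝ) - n / 2 ^ (m + 2)|) :
      dropLastRow y ∈ B ∨ dropSecondLastRow y ∈ B ∨ xorLastTwoRows y ∈ B := by
    simp only [B, mem_filter, mem_univ, true_and]
    refine le_abs_patternCount_row_sub_of_three_mul_le y ?_
    have h2 : (n : ℝ) / 2 ^ (m + 1) = 2 * (n / 2 ^ (m + 2)) := by
      field_simp
      ring
    have h3 : 3 * t = 2 * (n / 2 ^ (m + 2 + 1)) := by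
      simp only [t]
      field_simp
      ring
    rw [h2, h3, ← mul_sub, abs_mul, abs_two]
    gcongr
  calc _ ≤ _ := sum_filter_le_of_imp_or hP0 hrows
    _ ≤ (#B / Fintype.card (Fin (m + 1) → Fin n → Bool) + pushTVUnif P dropLastRow)
        + (#B / Fintype.card (Fin (m + 1) → Fin n → Bool) + pushTVUnif P dropSecondLastRow)
        + (#B / Fintype.card (Fin (m + 1) → Fin n → Bool) + pushTVUnif P xorLastTwoRows) := by
      gcongr <;> exact sum_filter_mem_le_card_div_add_pushTVUnif hP1 _ B
    _ ≤ _ := by linarith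

/-- For `k ≥ 2` random vectors `(X₁,…,X_k)` in `({0,1}ⁿ)^k` with joint law `P`
and `N = #{x : (X₁(x),…,X_k(x)) = (0,…,0,1)}`,
`P(|N − n/2^k| ≥ n/2^{k+1}) ≤ 6 e^{−n/(9·2^{2k−1})}
  + d_TV((X₁,…,X_{k−1}),π_{k−1}) + d_TV((X₁,…,X_{k−2},X_k),π_{k−1})
  + d_TV((X₁,…,X_{k−2},X_{k−1}+X_k),π_{k−1}) + d_TV((X₁,…,X_{k−2}),π_{k−2})`,
where `π_j` is the uniform measure on `({0,1}ⁿ)^j` and addition is coordinatewise mod 2. -/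
theorem pattern_concentration (k n : ℕ) (hk : 2 ≤ k)
    (P : (Fin k → Fin n → Bool) → ℝ)
    (hP0 : ∀ y, 0 ≤ P y) (hP1 : ∑ y, P y = 1) :
    ∑ y ∈ Finset.univ.filter
        (fun y : Fin k → Fin n → Bool =>
          (n : ℝ) / 2 ^ (k + 1) ≤
            |(((Finset.univ.filter fun x : Fin n =>
                ∀ i : Fin k, y i x = decide (i.val = k - 1)).card : ℝ)) - (n : ℝ) / 2 ^ k|),
        P y
      ≤ 6 * Real.exp (-(n : ℝ) / (9 * 2 ^ (2 * k - 1))) +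
        pushTVUnif P (fun y => fun i : Fin (k - 1) =>
          y ⟨i.val, by have := i.isLt; omega⟩) +
        pushTVUnif P (fun y => fun i : Fin (k - 1) =>
          if i.val < k - 2 then y ⟨i.val, by have := i.isLt; omega⟩ else y ⟨k - 1, by omega⟩) +
        pushTVUnif P (fun y => fun i : Fin (k - 1) =>
          if i.val < k - 2 then y ⟨i.val, by have := i.isLt; omega⟩
          else fun x => xor (y ⟨k - 2, by omega⟩ x) (y ⟨k - 1, by omega⟩ x)) +
        pushTVUnif P (fun y => fun i : Fin (k - 2) =>
          y ⟨i.val, by have := i.isLt; omega⟩) := by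
  obtain ⟨m, rfl⟩ : ∃ m, k = m + 2 := ⟨k - 2, by omega⟩
  exact le_add_of_le_of_nonneg (sum_abs_patternCount_sub_ge_le m n P hP0 hP1)
    (pushTVUnif_nonneg P _)
end
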